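/- Let λ, μ, ν > 0 and let ∇ be the unique ℝ-bilinear map V × V → V satisfying the Koszul formula 2·h(∇_A B, C) = h(C, [A,B]) + h(B, [C,A]) − h(A, [B,C]) for all A, B, C ∈ V. Then ∇_X X = 0, ∇_X Y = ((λ²+μ²+ν²)/(λμν))·Z, ∇_X Z = −((λ²+μ²+ν²)/(λμν))·Y, ∇_Y X = ((λ²+μ²−ν²)/(λμν))·Z, ∇_Y Y = 0, ∇_Y Z = ((λ²+μ²−ν²)/(λμν))·X, ∇_Z X = ((−λ²+μ²−ν²)/(λμν))·Y, ∇_Z Y = ((−λ²+μ²−ν²)/(λμν))·X, and ∇_Z Z = 0. -/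

import Mathlib

/-- The Lorentzian scalar product on `ℝ³` with `h(X,X) = −1`, `h(Y,Y) = h(Z,Z) = 1`. -/
def hLor (v w : Fin 3 → ℝ) : ℝ := -(v 0 * w 0) + v 1 * w 1 + v 2 * w 2

/-!
Since `h` is nondegenerate, a vector is determined by its `h`-products with the frame, and the
Koszul formula expresses these products for `∇_A B` through brackets alone. For an orthonormal
frame with `[X,Y] = a Z`, `[Z,X] = b Y`, `[Y,Z] = c X` this gives `∇` in terms of `a, b, c`; the
Berger coefficients follow by substituting `a = 2ν/(λμ)`, `b = 2μ/(λν)`, `c = 2λ/(μν)`.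
-/

theorem eq_of_hLor_frame_eq {v w : Fin 3 → ℝ}
    (h₀ : hLor v ![1, 0, 0] = hLor w ![1, 0, 0])
    (h₁ : hLor v ![0, 1, 0] = hLor w ![0, 1, 0])
    (h₂ : hLor v ![0, 0, 1] = hLor w ![0, 0, 1]) : v = w := by
  simp only [hLor, Fin.isValue, Matrix.cons_val_zero, mul_one, Matrix.cons_val_one, mul_zero,
    add_zero, Matrix.cons_val, neg_inj, neg_zero, zero_add] at h₀ h₁ h₂
  ext i
  fin_cases i <;> assumption

theorem levi_civita_of_structure_constants (a b c : ℝ)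
    (bracket : (Fin 3 → ℝ) →ₗ[ℝ] (Fin 3 → ℝ) →ₗ[ℝ] (Fin 3 → ℝ)) (halt : bracket.IsAlt)
    (hXY : bracket ![1, 0, 0] ![0, 1, 0] = a • ![0, 0, 1])
    (hZX : bracket ![0, 0, 1] ![1, 0, 0] = b • ![0, 1, 0])
    (hYZ : bracket ![0, 1, 0] ![0, 0, 1] = c • ![1, 0, 0])
    (nabla : (Fin 3 → ℝ) →ₗ[ℝ] (Fin 3 → ℝ) →ₗ[ℝ] (Fin 3 → ℝ))
    (hKoszul : ∀ A B C, 2 * hLor (nabla A B) C =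
      hLor C (bracket A B) + hLor B (bracket C A) - hLor A (bracket B C)) :
    nabla ![1, 0, 0] ![1, 0, 0] = 0 ∧
    nabla ![1, 0, 0] ![0, 1, 0] = ((a + b + c) / 2) • ![0, 0, 1] ∧
    nabla ![1, 0, 0] ![0, 0, 1] = -(((a + b + c) / 2) • ![0, 1, 0]) ∧
    nabla ![0, 1, 0] ![1, 0, 0] = ((b + c - a) / 2) • ![0, 0, 1] ∧
    nabla ![0, 1, 0] ![0, 1, 0] = 0 ∧
    nabla ![0, 1, 0] ![0, 0, 1] = ((b + c - a) / 2) • ![1, 0, 0] ∧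
    nabla ![0, 0, 1] ![1, 0, 0] = ((b - c - a) / 2) • ![0, 1, 0] ∧
    nabla ![0, 0, 1] ![0, 1, 0] = ((b - c - a) / 2) • ![1, 0, 0] ∧
    nabla ![0, 0, 1] ![0, 0, 1] = 0 := by
  have hYX : bracket ![0, 1, 0] ![1, 0, 0] = -(a • ![0, 0, 1]) := by rw [← halt.neg, hXY]
  have hXZ : bracket ![1, 0, 0] ![0, 0, 1] = -(b • ![0, 1, 0]) := by rw [← halt.neg, hZX]
  have hZY : bracket ![0, 0, 1] ![0, 1, 0] = -(c • ![1, 0, 0]) := by rw [← halt.neg, hYZ]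
  have hnabla : ∀ A B C, hLor (nabla A B) C =
      (hLor C (bracket A B) + hLor B (bracket C A) - hLor A (bracket B C)) / 2 :=
    fun A B C => by linarith [hKoszul A B C]
  refine ⟨?_, ?_, ?_, ?_, ?_, ?_, ?_, ?_, ?_⟩ <;> apply eq_of_hLor_frame_eq <;> rw [hnabla] <;>
    simp [hLor, hXY, hYX, hXZ, hZX, hYZ, hZY, halt.self_eq_zero] <;> ring

theorem div_mul_eq_sq_div_mul_mul (x y z : ℝ) : x / (y * z) = x ^ 2 / (x * y * z) := by
  rcases eq_or_ne x 0 with rfl | hx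
  · simp
  · rw [sq, mul_assoc x y z, mul_div_mul_left _ _ hx]

theorem levi_civita_lorentzian_berger_sphere_general
    (l m n : ℝ)
    (X Y Z : Fin 3 → ℝ) (hX : X = ![1, 0, 0]) (hY : Y = ![0, 1, 0]) (hZ : Z = ![0, 0, 1])
    (bracket : (Fin 3 → ℝ) →ₗ[ℝ] (Fin 3 → ℝ) →ₗ[ℝ] (Fin 3 → ℝ))
    (halt : ∀ v, bracket v v = 0)
    (hXY : bracket X Y = (2 * n / (l * m)) • Z)
    (hZX : bracket Z X = (2 * m / (l * n)) • Y)
    (hYZ : bracket Y Z = (2 * l / (m * n)) • X)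
    (nabla : (Fin 3 → ℝ) →ₗ[ℝ] (Fin 3 → ℝ) →ₗ[ℝ] (Fin 3 → ℝ))
    (hKoszul : ∀ A B C, 2 * hLor (nabla A B) C =
      hLor C (bracket A B) + hLor B (bracket C A) - hLor A (bracket B C)) :
    nabla X X = 0 ∧
    nabla X Y = ((l ^ 2 + m ^ 2 + n ^ 2) / (l * m * n)) • Z ∧
    nabla X Z = -(((l ^ 2 + m ^ 2 + n ^ 2) / (l * m * n)) • Y) ∧
    nabla Y X = ((l ^ 2 + m ^ 2 - n ^ 2) / (l * m * n)) • Z ∧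
    nabla Y Y = 0 ∧
    nabla Y Z = ((l ^ 2 + m ^ 2 - n ^ 2) / (l * m * n)) • X ∧
    nabla Z X = ((-l ^ 2 + m ^ 2 - n ^ 2) / (l * m * n)) • Y ∧
    nabla Z Y = ((-l ^ 2 + m ^ 2 - n ^ 2) / (l * m * n)) • X ∧
    nabla Z Z = 0 := by
  subst hX hY hZ
  obtain ⟨hsum, hdiff, hdiff'⟩ :
      (2 * n / (l * m) + 2 * m / (l * n) + 2 * l / (m * n)) / 2 =
        (l ^ 2 + m ^ 2 + n ^ 2) / (l * m * n) ∧
      (2 * m / (l * n) + 2 * l / (m * n) - 2 * n / (l * m)) / 2 =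
        (l ^ 2 + m ^ 2 - n ^ 2) / (l * m * n) ∧
      (2 * m / (l * n) - 2 * l / (m * n) - 2 * n / (l * m)) / 2 =
        (-l ^ 2 + m ^ 2 - n ^ 2) / (l * m * n) := by
    simp only [mul_div_assoc, div_mul_eq_sq_div_mul_mul l m n, div_mul_eq_sq_div_mul_mul m l n,
      div_mul_eq_sq_div_mul_mul n l m]
    refine ⟨?_, ?_, ?_⟩ <;> ring
  have h := levi_civita_of_structure_constants _ _ _ bracket halt hXY hZX hYZ nabla hKoszul
  rwa [hsum, hdiff, hdiff'] at h

theorem levi_civita_lorentzian_berger_sphere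
    (l m n : ℝ) (hl : 0 < l) (hm : 0 < m) (hn : 0 < n)
    (X Y Z : Fin 3 → ℝ) (hX : X = ![1, 0, 0]) (hY : Y = ![0, 1, 0]) (hZ : Z = ![0, 0, 1])
    (bracket : (Fin 3 → ℝ) →ₗ[ℝ] (Fin 3 → ℝ) →ₗ[ℝ] (Fin 3 → ℝ))
    (halt : ∀ v, bracket v v = 0)
    (hXY : bracket X Y = (2 * n / (l * m)) • Z)
    (hZX : bracket Z X = (2 * m / (l * n)) • Y)
    (hYZ : bracket Y Z = (2 * l / (m * n)) • X)
    (nabla : (Fin 3 → ℝ) →ₗ[ℝ] (Fin 3 → ℝ) →ₗ[ℝ] (Fin 3 → ℝ))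
    (hKoszul : ∀ A B C, 2 * hLor (nabla A B) C =
      hLor C (bracket A B) + hLor B (bracket C A) - hLor A (bracket B C)) :
    nabla X X = 0 ∧
    nabla X Y = ((l ^ 2 + m ^ 2 + n ^ 2) / (l * m * n)) • Z ∧
    nabla X Z = -(((l ^ 2 + m ^ 2 + n ^ 2) / (l * m * n)) • Y) ∧
    nabla Y X = ((l ^ 2 + m ^ 2 - n ^ 2) / (l * m * n)) • Z ∧
    nabla Y Y = 0 ∧
    nabla Y Z = ((l ^ 2 + m ^ 2 - n ^ 2) / (l * m * n)) • X ∧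
    nabla Z X = ((-l ^ 2 + m ^ 2 - n ^ 2) / (l * m * n)) • Y ∧
    nabla Z Y = ((-l ^ 2 + m ^ 2 - n ^ 2) / (l * m * n)) • X ∧
    nabla Z Z = 0 :=
  levi_civita_lorentzian_berger_sphere_general l m n X Y Z hX hY hZ bracket halt hXY hZX hYZ nabla
    hKoszul
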